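/- Let I ⊆ ℝ be an interval and let T₀, T₁, T₂, T₃ : I → M_N(ℂ) be differentiable matrix-valued functions satisfying the Nahm equation dT_i/ds + [T₀, T_i] = (1/2) Σ_{j,k} ε_{ijk} [T_j, T_k] for i = 1, 2, 3. Then for every ζ ∈ ℂ the characteristic polynomial of i·T(ζ)(s), i.e. η ↦ det(η·I_N − i T(ζ)(s)), is independent of s ∈ I, where T(ζ) = (1/2)(T₁ + i T₂) + ζ T₃ − (1/2)(T₁ − i T₂) ζ². -/

import Mathlib

/-!
Writing `T(ζ)` for the matrix of the spectral curve, the Nahm equations are equivalent to the Lax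
equation `dT(ζ)/ds = [T(ζ), B(ζ)]` with `B(ζ) = T₀ − i T₃ + ζ (i T₁ + T₂)`. By Jacobi's formula the
derivative of `det M` along any Lax flow `M' = [M, B]` is `tr (adj M · [M, B]) = 0`, because
`adj M` commutes with `M`; apply this to `M = η − i T(ζ)` and integrate over the interval.
-/

attribute [local instance] Matrix.normedAddCommGroup Matrix.normedSpace

/-- The Levi-Civita symbol `ε_{ijk}` on indices in `Fin 3` (with `ε₀₁₂ = 1`). -/
def eps (i j k : Fin 3) : ℤ :=
  (((j : ℕ) : ℤ) - ((i : ℕ) : ℤ)) * (((k : ℕ) : ℤ) - ((i : ℕ) : ℤ))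
    * (((k : ℕ) : ℤ) - ((j : ℕ) : ℤ)) / 2

/-- `T(ζ) = (1/2)(T₁ + i T₂) + ζ T₃ − (1/2)(T₁ − i T₂) ζ²`
(spatial Nahm matrices indexed by `Fin 3`, so `T 0 = T₁` etc.). -/
noncomputable def Tz {N : ℕ} (T : Fin 3 → ℝ → Matrix (Fin N) (Fin N) ℂ) (ζ : ℂ) (s : ℝ) :
    Matrix (Fin N) (Fin N) ℂ :=
  (1 / 2 : ℂ) • (T 0 s + Complex.I • T 1 s) + ζ • T 2 s
    - ((1 / 2 : ℂ) * ζ ^ 2) • (T 0 s - Complex.I • T 1 s)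

namespace Matrix

variable {n R : Type*} [Fintype n] [DecidableEq n] [CommRing R]

theorem det_updateRow_eq_sum_adjugate (A : Matrix n n R) (i : n) (v : n → R) :
    (A.updateRow i v).det = ∑ k, A.adjugate k i * v k := by
  rw [← det_transpose, ← updateCol_transpose, ← cramer_apply, cramer_eq_adjugate_mulVec,
    ← adjugate_transpose]
  rfl

theorem trace_adjugate_mul (A H : Matrix n n R) :
    trace (A.adjugate * H) = ∑ i, (A.updateRow i (H i)).det := by
  simp only [det_updateRow_eq_sum_adjugate, trace, diag, mul_apply]
  exact Finset.sum_comm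

theorem trace_adjugate_mul_commutator (A B : Matrix n n R) :
    trace (A.adjugate * (A * B - B * A)) = 0 := by
  rw [mul_sub, ← Matrix.mul_assoc, ← Matrix.mul_assoc, trace_sub, trace_mul_cycle A.adjugate B A,
    adjugate_mul, mul_adjugate, sub_self]

end Matrix

section Calculus

variable {𝕜 n R : Type*} [NontriviallyNormedField 𝕜] [Fintype n] [DecidableEq n]
  [NormedCommRing R] [NormedAlgebra 𝕜 R]

theorem HasDerivWithinAt.matrix_det {M : 𝕜 → Matrix n n R} {M' : Matrix n n R} {s : Set 𝕜}
    {x : 𝕜} (h : HasDerivWithinAt M M' s x) :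
    HasDerivWithinAt (fun t => (M t).det) ((M x).adjugate * M').trace s x := by
  let D : ContinuousMultilinearMap 𝕜 (fun _ : n => n → R) R :=
    ⟨(Matrix.detRowAlternating : (n → R) [⋀^n]→ₗ[R] R).toMultilinearMap.restrictScalars 𝕜,
      continuous_id.matrix_det⟩
  refine ((D.hasFDerivAt (M x)).comp_hasDerivWithinAt x h).congr_deriv ?_
  rw [Matrix.trace_adjugate_mul]
  exact D.linearDeriv_apply (M x) M'

theorem HasDerivWithinAt.matrix_det_of_lax {M : 𝕜 → Matrix n n R} {B : Matrix n n R}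
    {s : Set 𝕜} {x : 𝕜} (h : HasDerivWithinAt M (M x * B - B * M x) s x) :
    HasDerivWithinAt (fun t => (M t).det) 0 s x := by
  simpa only [Matrix.trace_adjugate_mul_commutator] using h.matrix_det

end Calculus

theorem Convex.eq_of_hasDerivWithinAt_zero {𝕜 G : Type*} [RCLike 𝕜] [NormedAddCommGroup G]
    [NormedSpace 𝕜 G] {f : 𝕜 → G} {s : Set 𝕜} (hs : Convex ℝ s)
    (hf : ∀ x ∈ s, HasDerivWithinAt f 0 s x) {x y : 𝕜} (hx : x ∈ s) (hy : y ∈ s) :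
    f x = f y := by
  have h := hs.norm_image_sub_le_of_norm_hasDerivWithin_le hf (fun _ _ => norm_zero.le) hy hx
  rwa [zero_mul, norm_le_zero_iff, sub_eq_zero] at h

theorem neg_smul_commutator_eq_commutator_smul_one_sub {R A : Type*} [CommRing R] [Ring A]
    [Algebra R A] (η c : R) (X B : A) :
    -(c • (X * B - B * X)) = (η • 1 - c • X) * B - B * (η • 1 - c • X) := by
  simp only [sub_mul, mul_sub, smul_mul_assoc, mul_smul_comm, one_mul, mul_one, smul_sub]
  abel

theorem half_smul_sum_eps_smul_commutator {A : Type*} [Ring A] [Module ℂ A] (X : Fin 3 → A)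
    (i : Fin 3) :
    (1 / 2 : ℂ) • ∑ j, ∑ k, (eps i j k : ℂ) • (X j * X k - X k * X j) =
      X (i + 1) * X (i + 2) - X (i + 2) * X (i + 1) := by
  fin_cases i <;> simp [Fin.sum_univ_three, eps] <;> module

section Nahm

variable {N : ℕ}

theorem hasDerivWithinAt_Tz {T T' : Fin 3 → ℝ → Matrix (Fin N) (Fin N) ℂ} {I : Set ℝ} {s : ℝ}
    (hT : ∀ i, HasDerivWithinAt (T i) (T' i s) I s) (ζ : ℂ) :
    HasDerivWithinAt (Tz T ζ) (Tz T' ζ s) I s :=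
  ((((hT 0).add ((hT 1).const_smul Complex.I)).const_smul (1 / 2 : ℂ)).add
    ((hT 2).const_smul ζ)).sub
    (((hT 0).sub ((hT 1).const_smul Complex.I)).const_smul ((1 / 2 : ℂ) * ζ ^ 2))

noncomputable def laxMatrix (T₀ : Matrix (Fin N) (Fin N) ℂ)
    (T : Fin 3 → ℝ → Matrix (Fin N) (Fin N) ℂ) (ζ : ℂ) (s : ℝ) : Matrix (Fin N) (Fin N) ℂ :=
  T₀ - Complex.I • T 2 s + ζ • (Complex.I • T 0 s + T 1 s)

theorem Tz_deriv_eq_commutator_laxMatrix {T₀ : Matrix (Fin N) (Fin N) ℂ}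
    {T T' : Fin 3 → ℝ → Matrix (Fin N) (Fin N) ℂ} {s : ℝ}
    (h : ∀ i, T' i s + (T₀ * T i s - T i s * T₀) =
      T (i + 1) s * T (i + 2) s - T (i + 2) s * T (i + 1) s) (ζ : ℂ) :
    Tz T' ζ s = Tz T ζ s * laxMatrix T₀ T ζ s - laxMatrix T₀ T ζ s * Tz T ζ s := by
  have hT' : ∀ i, T' i s = T (i + 1) s * T (i + 2) s - T (i + 2) s * T (i + 1) s
      - (T₀ * T i s - T i s * T₀) := fun i => eq_sub_of_add_eq (h i)
  simp only [Tz, laxMatrix, hT', Fin.reduceAdd]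
  simp only [Matrix.mul_add, Matrix.add_mul, Matrix.mul_sub, Matrix.sub_mul,
    Matrix.mul_smul, Matrix.smul_mul, smul_smul, smul_add, smul_sub]
  match_scalars <;> ring_nf <;> simp only [Complex.I_sq] <;> ring

end Nahm

theorem spectral_curve_independent_of_s_general {N : ℕ} (I : Set ℝ) (hI : Convex ℝ I)
    (T₀ : ℝ → Matrix (Fin N) (Fin N) ℂ)
    (T T' : Fin 3 → ℝ → Matrix (Fin N) (Fin N) ℂ)
    (hT : ∀ (i : Fin 3), ∀ s ∈ I, HasDerivWithinAt (T i) (T' i s) I s)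
    (hnahm : ∀ (i : Fin 3), ∀ s ∈ I,
      T' i s + (T₀ s * T i s - T i s * T₀ s) =
        (1 / 2 : ℂ) • ∑ j : Fin 3, ∑ k : Fin 3,
          (eps i j k : ℂ) • (T j s * T k s - T k s * T j s)) :
    ∀ (ζ η : ℂ), ∀ s ∈ I, ∀ t ∈ I,
      (η • (1 : Matrix (Fin N) (Fin N) ℂ) - Complex.I • Tz T ζ s).det =
        (η • (1 : Matrix (Fin N) (Fin N) ℂ) - Complex.I • Tz T ζ t).det := by
  intro ζ η s hs t ht
  refine hI.eq_of_hasDerivWithinAt_zero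
    (f := fun u => (η • (1 : Matrix (Fin N) (Fin N) ℂ) - Complex.I • Tz T ζ u).det)
    (fun u hu => ?_) hs ht
  have hlax := Tz_deriv_eq_commutator_laxMatrix
    (fun i => (hnahm i u hu).trans (half_smul_sum_eps_smul_commutator (T · u) i)) ζ
  have hM := ((hasDerivWithinAt_Tz (fun i => hT i u hu) ζ).const_smul Complex.I).const_sub
    (η • (1 : Matrix (Fin N) (Fin N) ℂ))
  rw [hlax, neg_smul_commutator_eq_commutator_smul_one_sub η] at hM
  exact hM.matrix_det_of_lax

/-- If `T₀, T₁, T₂, T₃ : I → M_N(ℂ)` satisfy the Nahm equation on an interval `I`, then for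
every `ζ ∈ ℂ` the characteristic polynomial `η ↦ det(η·1 − i T(ζ)(s))` is independent of
`s ∈ I` (the spectral curve is conserved). -/
theorem spectral_curve_independent_of_s {N : ℕ} (I : Set ℝ) (hI : Convex ℝ I)
    (T₀ : ℝ → Matrix (Fin N) (Fin N) ℂ)
    (T T' : Fin 3 → ℝ → Matrix (Fin N) (Fin N) ℂ)
    (hT₀ : ∀ s ∈ I, DifferentiableWithinAt ℝ T₀ I s)
    (hT : ∀ (i : Fin 3), ∀ s ∈ I, HasDerivWithinAt (T i) (T' i s) I s)
    (hnahm : ∀ (i : Fin 3), ∀ s ∈ I,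
      T' i s + (T₀ s * T i s - T i s * T₀ s) =
        (1 / 2 : ℂ) • ∑ j : Fin 3, ∑ k : Fin 3,
          (eps i j k : ℂ) • (T j s * T k s - T k s * T j s)) :
    ∀ (ζ η : ℂ), ∀ s ∈ I, ∀ t ∈ I,
      (η • (1 : Matrix (Fin N) (Fin N) ℂ) - Complex.I • Tz T ζ s).det =
        (η • (1 : Matrix (Fin N) (Fin N) ℂ) - Complex.I • Tz T ζ t).det :=
  spectral_curve_independent_of_s_general I hI T₀ T T' hT hnahm
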